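/- arXiv:2005.09744 — 2 statements merged into one kernel-verified Lean document; each statement's English description precedes it below -/
import Mathlib

section
/- Let X = ⌊Y⌋ where Y has continuous log-symmetric CDF F_Y(y) = G((1/√φ) log(y/λ)) with G a strictly increasing continuous CDF satisfying G(0) = 1/2. If λ is a positive natural number, then λ − 1 is a median of X, i.e., P(X ≤ λ − 1) ≥ 1/2 and P(X ≥ λ − 1) ≥ 1/2. -/
open MeasureTheory Filter Set Topology

/-!
Since `G` is continuous at `0`, the CDF `t ↦ G (log (t / n) / √φ)` of `Y` is continuous at `t = n`
with value `G 0 = 1/2`, so `P(Y < n) = P(Y ≤ n) = 1/2`. Now `⌊Y⌋ ≤ n - 1` means `Y < n`, and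
`n - 1 ≤ ⌊Y⌋` holds as soon as `Y > n`, an event of probability `1 - P(Y ≤ n) = 1/2`.
-/

theorem Int.setOf_floor_le_sub_one (m : ℤ) : {y : ℝ | ⌊y⌋ ≤ m - 1} = Iio (m : ℝ) := by
  ext y
  simp only [mem_ofPred_eq, mem_Iio, Int.le_sub_one_iff, Int.floor_lt]

theorem Int.setOf_sub_one_le_floor (m : ℤ) : {y : ℝ | m - 1 ≤ ⌊y⌋} = Ici ((m : ℝ) - 1) := by
  ext y
  simp only [mem_ofPred_eq, mem_Ici, Int.le_floor, Int.cast_sub, Int.cast_one]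

theorem tendsto_comp_log_div_div {G : ℝ → ℝ} (hG : ContinuousAt G 0) {c : ℝ} (hc : c ≠ 0)
    (s : ℝ) : Tendsto (fun t => G (Real.log (t / c) / s)) (𝓝 c) (𝓝 (G 0)) := by
  have hlog : ContinuousAt (fun t => Real.log (t / c) / s) c :=
    ((Real.continuousAt_log (by simp [div_self hc])).comp
      (continuousAt_id.div_const c)).div_const s
  have hval : Real.log (c / c) / s = 0 := by rw [div_self hc, Real.log_one, zero_div]
  have h := (hG.comp_of_eq hlog hval).tendsto
  rwa [Function.comp_apply, hval] at h

theorem MeasureTheory.le_measureReal_Iio_of_tendsto {μ : Measure ℝ} [IsFiniteMeasure μ]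
    {a c : ℝ} (h : Tendsto (fun t => μ.real (Iic t)) (𝓝[<] a) (𝓝 c)) : c ≤ μ.real (Iio a) :=
  le_of_tendsto h <| eventually_mem_nhdsWithin.mono fun _ ht =>
    measureReal_mono (Iic_subset_Iio.2 ht)

theorem stmt_13_general (n : ℕ) (hn : 0 < n) (phi : ℝ)
    (G : ℝ → ℝ) (hcont : Continuous G) (hG0 : G 0 = 1 / 2)
    (μ : Measure ℝ) [IsProbabilityMeasure μ]
    (hFY : ∀ t : ℝ, 0 < t →
      (μ (Set.Iic t)).toReal = G (Real.log (t / (n : ℝ)) / Real.sqrt phi)) :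
    1 / 2 ≤ (μ {y : ℝ | ⌊y⌋ ≤ (n : ℤ) - 1}).toReal ∧
      1 / 2 ≤ (μ {y : ℝ | (n : ℤ) - 1 ≤ ⌊y⌋}).toReal := by
  simp only [← measureReal_def] at hFY ⊢
  have hnR : (0 : ℝ) < n := Nat.cast_pos.2 hn
  have hcdf : Tendsto (fun t => μ.real (Iic t)) (𝓝 (n : ℝ)) (𝓝 (1 / 2)) := by
    refine hG0 ▸ (tendsto_comp_log_div_div hcont.continuousAt hnR.ne' √phi).congr' ?_
    filter_upwards [eventually_gt_nhds hnR] with t ht using (hFY t ht).symm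
  have hcdf_n : μ.real (Iic (n : ℝ)) = 1 / 2 := by
    rw [hFY n hnR, div_self hnR.ne', Real.log_one, zero_div, hG0]
  constructor
  · rw [Int.setOf_floor_le_sub_one, Int.cast_natCast]
    exact le_measureReal_Iio_of_tendsto (hcdf.mono_left nhdsWithin_le_nhds)
  · calc (1 : ℝ) / 2 = μ.real (Iic (n : ℝ))ᶜ := by
          rw [probReal_compl_eq_one_sub measurableSet_Iic, hcdf_n]; norm_num
      _ ≤ _ := by
          rw [compl_Iic, Int.setOf_sub_one_le_floor, Int.cast_natCast]
          exact measureReal_mono fun y hy => by rw [mem_Ici]; linarith [mem_Ioi.1 hy]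

/-- Let `X = ⌊Y⌋` where `Y` has continuous log-symmetric CDF
`F_Y(y) = G(log(y/λ)/√φ)` with `G` a continuous strictly increasing CDF with `G(0) = 1/2`.
If `λ` is a positive natural number `n`, then `n - 1` is a median of `X`:
`P(X ≤ n-1) ≥ 1/2` and `P(X ≥ n-1) ≥ 1/2`. -/
theorem stmt_13 (n : ℕ) (hn : 0 < n) (phi : ℝ) (hphi : 0 < phi)
    (G : ℝ → ℝ) (hmono : StrictMono G) (hcont : Continuous G) (hG0 : G 0 = 1 / 2)
    (μ : Measure ℝ) [IsProbabilityMeasure μ] (hsupp : μ (Set.Iic (0 : ℝ)) = 0)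
    (hFY : ∀ t : ℝ, 0 < t →
      (μ (Set.Iic t)).toReal = G (Real.log (t / (n : ℝ)) / Real.sqrt phi)) :
    1 / 2 ≤ (μ {y : ℝ | ⌊y⌋ ≤ (n : ℤ) - 1}).toReal ∧
      1 / 2 ≤ (μ {y : ℝ | (n : ℤ) - 1 ≤ ⌊y⌋}).toReal :=
  stmt_13_general n hn phi G hcont hG0 μ hFY
end

section
/- Let Y have a unimodal density f on (0,∞) in the sense that there exists y₀ > 0 with f nondecreasing on (0, y₀] and nonincreasing on [y₀, ∞). Then the PMF p(x) = ∫_x^{x+1} f of X = ⌊Y⌋ is unimodal: there exists a natural number x₀ such that p is nondecreasing on {0,...,x₀} and nonincreasing on {x₀, x₀+1, ...}. -/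
/-!
Comparing `p x = ∫_x^{x+1} f` with `p (x + 1) = ∫_x^{x+1} f (· + 1)` pointwise shows that `p`
increases while `x + 2 ≤ y₀` and decreases once `y₀ ≤ x`. Only the two steps around the window
`[t, t + 1] ∋ y₀` remain, and there `p` has no strict valley: monotonicity bounds the neighbouring
windows by `f t` and `f (t + 1)`, while splitting `[t, t + 1]` at `y₀` bounds the middle window
below by a convex combination of these two values.
-/

open MeasureTheory Set

noncomputable def unitIntervalIntegral (f : ℝ → ℝ) (t : ℝ) : ℝ := ∫ y in t..t + 1, f y

section IntervalBounds

variable {f : ℝ → ℝ} {a b c : ℝ}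

theorem intervalIntegral_le_mul_of_le (hab : a ≤ b) (hf : IntervalIntegrable f volume a b)
    (h : ∀ y ∈ Ioo a b, f y ≤ c) : ∫ y in a..b, f y ≤ (b - a) * c := by
  simpa using intervalIntegral.integral_mono_on_of_le_Ioo hab hf intervalIntegrable_const h

theorem mul_le_intervalIntegral_of_le (hab : a ≤ b) (hf : IntervalIntegrable f volume a b)
    (h : ∀ y ∈ Ioo a b, c ≤ f y) : (b - a) * c ≤ ∫ y in a..b, f y := by
  simpa using intervalIntegral.integral_mono_on_of_le_Ioo hab intervalIntegrable_const hf h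

end IntervalBounds

section UnitIntervalIntegral

variable {f : ℝ → ℝ} {t : ℝ}

theorem unitIntervalIntegral_add_one (f : ℝ → ℝ) (t : ℝ) :
    unitIntervalIntegral f (t + 1) = ∫ y in t..t + 1, f (y + 1) := by
  rw [unitIntervalIntegral, intervalIntegral.integral_comp_add_right]

theorem unitIntervalIntegral_le_add_one (hf : Integrable f) (h : MonotoneOn f (Ioo t (t + 2))) :
    unitIntervalIntegral f t ≤ unitIntervalIntegral f (t + 1) := by
  rw [unitIntervalIntegral_add_one]
  refine intervalIntegral.integral_mono_on_of_le_Ioo (by linarith) hf.intervalIntegrable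
    (hf.comp_add_right 1).intervalIntegrable fun y hy => ?_
  exact h ⟨hy.1, by linarith [hy.2]⟩ ⟨by linarith [hy.1], by linarith [hy.2]⟩ (by linarith)

theorem unitIntervalIntegral_add_one_le (hf : Integrable f) (h : AntitoneOn f (Ioo t (t + 2))) :
    unitIntervalIntegral f (t + 1) ≤ unitIntervalIntegral f t := by
  rw [unitIntervalIntegral_add_one]
  refine intervalIntegral.integral_mono_on_of_le_Ioo (by linarith)
    (hf.comp_add_right 1).intervalIntegrable hf.intervalIntegrable fun y hy => ?_
  exact h ⟨hy.1, by linarith [hy.2]⟩ ⟨by linarith [hy.1], by linarith [hy.2]⟩ (by linarith)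

theorem min_unitIntervalIntegral_sub_one_add_one_le (hf : Integrable f) {m : ℝ} (htm : t ≤ m)
    (hmt : m ≤ t + 1) (hmono : MonotoneOn f (Ioc (t - 1) m)) (hanti : AntitoneOn f (Ici m)) :
    min (unitIntervalIntegral f (t - 1)) (unitIntervalIntegral f (t + 1)) ≤
      unitIntervalIntegral f t := by
  have hleft : unitIntervalIntegral f (t - 1) ≤ f t := by
    simpa [unitIntervalIntegral] using
      intervalIntegral_le_mul_of_le (show t - 1 ≤ t - 1 + 1 by linarith) hf.intervalIntegrable
        fun y hy => hmono ⟨hy.1, by linarith [hy.2]⟩ ⟨by linarith, htm⟩ (by linarith [hy.2])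
  have hright : unitIntervalIntegral f (t + 1) ≤ f (t + 1) := by
    simpa [unitIntervalIntegral] using
      intervalIntegral_le_mul_of_le (show t + 1 ≤ t + 1 + 1 by linarith) hf.intervalIntegrable
        fun y hy => hanti (show m ≤ t + 1 from hmt) (show m ≤ y by linarith [hy.1]) hy.1.le
  have hmid : (m - t) * f t + (t + 1 - m) * f (t + 1) ≤ unitIntervalIntegral f t := by
    rw [unitIntervalIntegral, ← intervalIntegral.integral_add_adjacent_intervals (b := m)
      hf.intervalIntegrable hf.intervalIntegrable]
    exact add_le_add
      (mul_le_intervalIntegral_of_le htm hf.intervalIntegrable fun y hy =>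
        hmono ⟨by linarith, htm⟩ ⟨by linarith [hy.1], hy.2.le⟩ hy.1.le)
      (mul_le_intervalIntegral_of_le hmt hf.intervalIntegrable fun y hy =>
        hanti hy.1.le hmt hy.2.le)
  rcases le_total (f t) (f (t + 1)) with h | h
  · linarith [min_le_left (unitIntervalIntegral f (t - 1)) (unitIntervalIntegral f (t + 1)),
      mul_le_mul_of_nonneg_left h (sub_nonneg.2 hmt)]
  · linarith [min_le_right (unitIntervalIntegral f (t - 1)) (unitIntervalIntegral f (t + 1)),
      mul_le_mul_of_nonneg_left h (sub_nonneg.2 htm)]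

end UnitIntervalIntegral

section Unimodal

variable {p : ℕ → ℝ}

theorem monotoneOn_Iic_antitoneOn_Ici_of_steps {n : ℕ} (hup : ∀ x < n, p x ≤ p (x + 1))
    (hdown : ∀ x, n ≤ x → p (x + 1) ≤ p x) : MonotoneOn p (Iic n) ∧ AntitoneOn p (Ici n) :=
  ⟨monotoneOn_of_le_succ ordConnected_Iic fun x _ _ hx => by
      simpa using hup x (Order.succ_le_iff.mp hx),
    antitoneOn_of_succ_le ordConnected_Ici fun x _ hx _ => by simpa using hdown x hx⟩

theorem exists_monotoneOn_Iic_antitoneOn_Ici_of_steps (n : ℕ) (hup : ∀ x < n, p x ≤ p (x + 1))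
    (hdown : ∀ x, n + 2 ≤ x → p (x + 1) ≤ p x) (hpeak : min (p n) (p (n + 2)) ≤ p (n + 1)) :
    ∃ x₀, MonotoneOn p (Iic x₀) ∧ AntitoneOn p (Ici x₀) := by
  by_cases h₁ : p n ≤ p (n + 1)
  · by_cases h₂ : p (n + 1) ≤ p (n + 2)
    · refine ⟨n + 2, monotoneOn_Iic_antitoneOn_Ici_of_steps (fun x hx => ?_) hdown⟩
      rcases (by omega : x < n ∨ x = n ∨ x = n + 1) with hx | rfl | rfl
      exacts [hup x hx, h₁, h₂]
    · refine ⟨n + 1, monotoneOn_Iic_antitoneOn_Ici_of_steps (fun x hx => ?_) fun x hx => ?_⟩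
      · rcases (by omega : x < n ∨ x = n) with hx | rfl
        exacts [hup x hx, h₁]
      · rcases (by omega : x = n + 1 ∨ n + 2 ≤ x) with rfl | hx
        exacts [(not_le.mp h₂).le, hdown x hx]
  · have h₂ : p (n + 2) ≤ p (n + 1) := (min_le_iff.mp hpeak).resolve_left h₁
    refine ⟨n, monotoneOn_Iic_antitoneOn_Ici_of_steps hup fun x hx => ?_⟩
    rcases (by omega : x = n ∨ x = n + 1 ∨ n + 2 ≤ x) with rfl | rfl | hx
    exacts [(not_le.mp h₁).le, h₂, hdown x hx]

end Unimodal

section UnimodalDensity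

variable {f : ℝ → ℝ} {m : ℝ}

theorem unitIntervalIntegral_natCast_le_succ (hf : Integrable f) (hmono : MonotoneOn f (Ioc 0 m))
    {x : ℕ} (hx : (x : ℝ) + 2 ≤ m) :
    unitIntervalIntegral f x ≤ unitIntervalIntegral f ↑(x + 1) := by
  rw [Nat.cast_succ]
  exact unitIntervalIntegral_le_add_one hf (hmono.mono fun y hy =>
    ⟨(Nat.cast_nonneg x).trans_lt hy.1, by linarith [hy.2]⟩)

theorem unitIntervalIntegral_natCast_succ_le (hf : Integrable f) (hanti : AntitoneOn f (Ici m))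
    {x : ℕ} (hx : m ≤ x) : unitIntervalIntegral f ↑(x + 1) ≤ unitIntervalIntegral f x := by
  rw [Nat.cast_succ]
  exact unitIntervalIntegral_add_one_le hf (hanti.mono fun y hy => hx.trans hy.1.le)

theorem min_unitIntervalIntegral_natCast_le (hf : Integrable f) (hmono : MonotoneOn f (Ioc 0 m))
    (hanti : AntitoneOn f (Ici m)) {n : ℕ} (hnm : (n : ℝ) + 1 ≤ m) (hmn : m ≤ n + 2) :
    min (unitIntervalIntegral f n) (unitIntervalIntegral f ↑(n + 2)) ≤
      unitIntervalIntegral f ↑(n + 1) := by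
  have := min_unitIntervalIntegral_sub_one_add_one_le hf (t := n + 1) hnm (by linarith)
    (hmono.mono fun y hy => ⟨by linarith [hy.1, (Nat.cast_nonneg n : (0 : ℝ) ≤ n)], hy.2⟩) hanti
  push_cast
  simpa [add_assoc, one_add_one_eq_two] using this

end UnimodalDensity

theorem stmt_17_general (f : ℝ → ℝ) (hint : Integrable f) (y₀ : ℝ)
    (hinc : ∀ y z : ℝ, 0 < y → y ≤ z → z ≤ y₀ → f y ≤ f z)
    (hdec : ∀ y z : ℝ, y₀ ≤ y → y ≤ z → f z ≤ f y)
    (p : ℕ → ℝ) (hp : ∀ x : ℕ, p x = ∫ y in (x : ℝ)..((x : ℝ) + 1), f y) :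
    ∃ x₀ : ℕ, (∀ a b : ℕ, a ≤ b → b ≤ x₀ → p a ≤ p b) ∧
      (∀ a b : ℕ, x₀ ≤ a → a ≤ b → p b ≤ p a) := by
  have hmono : MonotoneOn f (Ioc 0 y₀) := fun y hy z hz hyz => hinc y z hy.1 hyz hz.2
  have hanti : AntitoneOn f (Ici y₀) := fun y hy z _ hyz => hdec y z hy hyz
  obtain rfl : p = fun x : ℕ => unitIntervalIntegral f x := funext hp
  suffices ∃ x₀, MonotoneOn (fun x : ℕ => unitIntervalIntegral f x) (Iic x₀) ∧
      AntitoneOn (fun x : ℕ => unitIntervalIntegral f x) (Ici x₀) by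
    obtain ⟨x₀, hm, ha⟩ := this
    exact ⟨x₀, fun a b hab hb => hm (hab.trans hb) hb hab,
      fun a b ha' hab => ha ha' (ha'.trans hab) hab⟩
  -- the window `[n + 1, n + 2]` contains `y₀` (or `y₀ < 1` and `n = 0`)
  set n := ⌊y₀ - 1⌋₊
  have hn : y₀ < n + 2 := by linarith [Nat.lt_floor_add_one (y₀ - 1)]
  refine exists_monotoneOn_Iic_antitoneOn_Ici_of_steps n
    (fun x hx => unitIntervalIntegral_natCast_le_succ hint hmono ?_)
    (fun x hx => unitIntervalIntegral_natCast_succ_le hint hanti ?_) ?_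
  · have := (Nat.le_floor_iff' x.succ_ne_zero).mp hx
    push_cast at this
    linarith
  · have : (n : ℝ) + 2 ≤ x := by exact_mod_cast hx
    linarith
  · rcases lt_or_ge y₀ 1 with hy | hy
    · refine min_le_of_right_le (unitIntervalIntegral_natCast_succ_le hint hanti ?_)
      push_cast
      linarith [(Nat.cast_nonneg n : (0 : ℝ) ≤ n)]
    · exact min_unitIntervalIntegral_natCast_le hint hmono hanti
        (by linarith [Nat.floor_le (sub_nonneg.2 hy)]) hn.le

/-- If `Y` has a unimodal density `f` on `(0,∞)` (nondecreasing up to some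
`y₀ > 0`, nonincreasing afterwards), then the PMF `p(x) = ∫_x^{x+1} f` of `X = ⌊Y⌋` is
unimodal: there is an `x₀ ∈ ℕ` with `p` nondecreasing on `{0,…,x₀}` and nonincreasing on
`{x₀, x₀+1, …}`. -/
theorem stmt_17 (f : ℝ → ℝ) (hnn : ∀ y : ℝ, 0 ≤ f y) (hint : Integrable f)
    (hprob : ∫ y in Set.Ioi (0 : ℝ), f y = 1)
    (y₀ : ℝ) (hy₀ : 0 < y₀)
    (hinc : ∀ y z : ℝ, 0 < y → y ≤ z → z ≤ y₀ → f y ≤ f z)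
    (hdec : ∀ y z : ℝ, y₀ ≤ y → y ≤ z → f z ≤ f y)
    (p : ℕ → ℝ) (hp : ∀ x : ℕ, p x = ∫ y in (x : ℝ)..((x : ℝ) + 1), f y) :
    ∃ x₀ : ℕ, (∀ a b : ℕ, a ≤ b → b ≤ x₀ → p a ≤ p b) ∧
      (∀ a b : ℕ, x₀ ≤ a → a ≤ b → p b ≤ p a) :=
  stmt_17_general f hint y₀ hinc hdec p hp
end
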